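/- For every linear map U on ℂ^{F_d^n}, the second Pauli uniformity quantity equals the L⁴-norm of the Fourier transform: E_{h₁,h₂ ∈ F_d^{2n}} d^{−n} tr(∂_{h₂}∂_{h₁} U) = Σ_{a ∈ F_d^{2n}} |Û(a)|⁴. -/

import Mathlib

open Matrix Complex

namespace CH

variable (d n : ℕ) [NeZero d]

/-- Phase space `F_d^{2n}`, written as pairs `(u, v)` with `u, v ∈ F_d^n`. -/
abbrev PSpace := (Fin n → ZMod d) × (Fin n → ZMod d)

/-- Linear maps on `ℂ^{F_d^n}`, as matrices. -/
abbrev Mat := Matrix (Fin n → ZMod d) (Fin n → ZMod d) ℂ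

/-- `ω = e^{2πi/d}`. -/
noncomputable def omg : ℂ := Complex.exp (2 * Real.pi * Complex.I / d)

/-- `τ = (-1)^d e^{iπ/d}`. -/
noncomputable def tau : ℂ := (-1 : ℂ) ^ d * Complex.exp (Real.pi * Complex.I / d)

/-- `D = 2d` if `d = 2`, else `D = d`. -/
def Dd : ℕ := if d = 2 then 4 else d

/-- The translation operator `X^v`, with `X^v |u⟩ = |u + v⟩`. -/
noncomputable def Xop (v : Fin n → ZMod d) : Mat d n :=
  Matrix.of fun u u' => if u = u' + v then 1 else 0

/-- The phase operator `Z^v`, with `Z^v |u⟩ = ω^{u·v} |u⟩`. -/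
noncomputable def Zop (v : Fin n → ZMod d) : Mat d n :=
  Matrix.diagonal fun u => omg d ^ (∑ i, u i * v i : ZMod d).val

/-- The Weyl operator `W_{(u,v)} = τ^{-(|u₁v₁| + ⋯ + |uₙvₙ|)} Z^u X^v`. -/
noncomputable def Weyl (a : PSpace d n) : Mat d n :=
  tau d ^ (-(∑ i, ((a.1 i * a.2 i).val : ℤ))) • (Zop d n a.1 * Xop d n a.2)

/-- Normalized trace inner product `⟨A,B⟩ = d^{-n} tr(A* B)`. -/
noncomputable def trInner (A B : Mat d n) : ℂ := ((d : ℂ) ^ n)⁻¹ * (Aᴴ * B).trace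

/-- Normalized Frobenius norm `‖A‖₂ = ⟨A,A⟩^{1/2}`. -/
noncomputable def hsNorm (A : Mat d n) : ℝ := Real.sqrt (trInner d n A A).re

/-- Pauli derivative `∂_h U = W_h U W_h* U*`. -/
noncomputable def pderiv (h : PSpace d n) (U : Mat d n) : Mat d n :=
  Weyl d n h * U * (Weyl d n h)ᴴ * Uᴴ

/-- The quantity `‖U‖_{P^k}^{2^k} = E_{h₁,…,h_k} d^{-n} tr(∂_{h_k} ⋯ ∂_{h₁} U)`. -/
noncomputable def pq : ℕ → Mat d n → ℂ
  | 0, U => ((d : ℂ) ^ n)⁻¹ * U.trace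
  | (k+1), U => ((d : ℂ) ^ (2*n))⁻¹ * ∑ h : PSpace d n, pq k (pderiv d n h U)

/-- The `k`-th Pauli uniformity norm `‖U‖_{P^k}`, the `2^k`-th root of `pq k U`. -/
noncomputable def pnorm (k : ℕ) (U : Mat d n) : ℝ := (pq d n k U).re ^ (((2:ℝ) ^ k)⁻¹)

/-- The Pauli group `C^{(1)} = {τ^p W_h : p ∈ Z_D, h ∈ F_d^{2n}}`. -/
def pauliGroup : Set (Mat d n) :=
  {U | ∃ (p : ℕ) (h : PSpace d n), U = tau d ^ p • Weyl d n h}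

/-- The Clifford hierarchy. -/
def cliff : ℕ → Set (Mat d n)
  | 0 => {U | ∃ θ : ℝ, U = Complex.exp (θ * Complex.I) • (1 : Mat d n)}
  | 1 => pauliGroup d n
  | (k+2) => {U | U ∈ unitary (Mat d n) ∧
      ∀ P ∈ pauliGroup d n, U * P * Uᴴ ∈ cliff (k+1)}

/-- Pauli polynomials of degree at most `k`. -/
def ppoly : ℕ → Set (Mat d n)
  | 0 => {U | ∃ θ : ℝ, U = Complex.exp (θ * Complex.I) • (1 : Mat d n)}
  | (k+1) => {U | U ∈ unitary (Mat d n) ∧ ∀ h : PSpace d n, pderiv d n h U ∈ ppoly k}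

/-- Symplectic form `[(u,v),(u',v')] = u·v' - u'·v` on `F_d^{2n}`. -/
def symp (a b : PSpace d n) : ZMod d :=
  (∑ i, a.1 i * b.2 i) - (∑ i, b.1 i * a.2 i)

/-- Multiplication of the Heisenberg group. -/
def heisMul (β : PSpace d n → PSpace d n → ZMod (Dd d))
    (x y : ZMod (Dd d) × PSpace d n) : ZMod (Dd d) × PSpace d n :=
  (x.1 + y.1 + β x.2 y.2, x.2 + y.2)

/-!
Up to phases of modulus one the Weyl operators are the operators `Z^u X^v`; they satisfy
`W_h W_a W_h* = ω^{[h,a]} W_a` and every `U` expands as `U = Σ_a Û(a) W_a`. Hence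
`d^{-n} tr(∂_h U) = ⟨U, W_h U W_h*⟩ = Σ_a |Û(a)|² ω^{[h,a]}`: the normalized trace of a
Pauli derivative is the symplectic Fourier transform of `|Û|²`. Averaging over `h` picks out
its value at `0`, so `‖V‖_{P^1}² = |d^{-n} tr V|²`, and the second uniformity quantity becomes
`E_h |Σ_a |Û(a)|² ω^{[h,a]}|²`, which Parseval's identity turns into `Σ_a |Û(a)|⁴`.
-/

end CH

lemma AddChar.sum_dotProduct_eq_ite {R R' ι : Type*} [CommRing R] [Fintype R] [DecidableEq R]
    [CommRing R'] [IsDomain R'] [Fintype ι] [DecidableEq ι] {ψ : AddChar R R'}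
    (hψ : ψ.IsPrimitive) (w : ι → R) :
    ∑ p : ι → R, ψ (p ⬝ᵥ w)
      = if w = 0 then (Fintype.card R ^ Fintype.card ι : R') else 0 := by
  let χ : AddChar (ι → R) R' :=
    ψ.compAddMonoidHom (AddMonoidHom.mk' (· ⬝ᵥ w) fun p q => add_dotProduct p q w)
  have hχ : χ = 0 ↔ w = 0 := by
    refine ⟨fun h => funext fun i => by_contra fun hi => hψ hi ?_, fun h => ?_⟩
    · ext x
      simpa [χ, mul_comm] using DFunLike.congr_fun h (Pi.single i x)
    · ext p
      simp [χ, h]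
  have := AddChar.sum_eq_ite χ
  simp only [hχ, Fintype.card_fun, Nat.cast_pow] at this
  exact this

lemma Complex.conj_mul_self_of_norm_eq_one {c : ℂ} (hc : ‖c‖ = 1) :
    starRingEnd ℂ c * c = 1 := by
  rw [Complex.conj_mul', hc, Complex.ofReal_one, one_pow]

lemma Matrix.smul_mul_mul_conjTranspose_smul {m : Type*} [Fintype m] {c : ℂ} (hc : ‖c‖ = 1)
    (A M : Matrix m m ℂ) : c • A * M * (c • A)ᴴ = A * M * Aᴴ := by
  simp [conjTranspose_smul, smul_mul, smul_smul, Complex.conj_mul_self_of_norm_eq_one hc]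

namespace CH

local notation "ψ" => ZMod.stdAddChar

section

variable {d n : ℕ}

lemma norm_tau : ‖tau d‖ = 1 := by
  have : (Real.pi : ℂ) * Complex.I / d = ((Real.pi / d : ℝ) : ℂ) * Complex.I := by
    push_cast
    ring
  rw [tau, norm_mul, norm_pow, norm_neg, norm_one, one_pow, one_mul, this,
    Complex.norm_exp_ofReal_mul_I]

lemma symp_eq (a b : PSpace d n) : symp d n a b = a.1 ⬝ᵥ b.2 - b.1 ⬝ᵥ a.2 := rfl

lemma symp_sub_right (h a b : PSpace d n) :
    symp d n h (a - b) = symp d n h a - symp d n h b := by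
  simp only [symp_eq, Prod.fst_sub, Prod.snd_sub, dotProduct_sub, sub_dotProduct]
  ring

variable [NeZero d]

lemma trInner_smul_left (c : ℂ) (A B : Mat d n) :
    trInner d n (c • A) B = star c * trInner d n A B := by
  rw [trInner, trInner, conjTranspose_smul, smul_mul, trace_smul, smul_eq_mul, mul_left_comm]

lemma trInner_sum_smul {ι : Type*} (s : Finset ι) (A : Mat d n) (x : ι → ℂ)
    (B : ι → Mat d n) :
    trInner d n A (∑ i ∈ s, x i • B i) = ∑ i ∈ s, x i * trInner d n A (B i) := by
  simp only [trInner, Matrix.mul_smul, trace_sum, trace_smul, smul_eq_mul,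
    Finset.mul_sum]
  exact Finset.sum_congr rfl fun i _ => by ring

lemma star_trInner (A B : Mat d n) : star (trInner d n A B) = trInner d n B A := by
  rw [trInner, trInner, star_mul', ← trace_conjTranspose, conjTranspose_mul,
    conjTranspose_conjTranspose, star_inv₀, star_pow, star_natCast]

lemma pq_zero (V : Mat d n) : pq d n 0 V = ((d : ℂ) ^ n)⁻¹ * V.trace := rfl

lemma pq_succ (k : ℕ) (V : Mat d n) :
    pq d n (k + 1) V = ((d : ℂ) ^ (2 * n))⁻¹ * ∑ h, pq d n k (pderiv d n h V) := rfl

lemma omg_pow_val (x : ZMod d) : omg d ^ x.val = ψ x := by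
  rw [ZMod.stdAddChar_apply, ZMod.toCircle_apply, omg, ← Complex.exp_nat_mul]
  ring_nf

lemma sum_stdAddChar_dotProduct (w : Fin n → ZMod d) :
    ∑ p : Fin n → ZMod d, ψ (p ⬝ᵥ w) = if w = 0 then (d : ℂ) ^ n else 0 := by
  simpa using AddChar.sum_dotProduct_eq_ite (ZMod.isPrimitive_stdAddChar d) w

lemma sum_stdAddChar_symp (a : PSpace d n) :
    ∑ h : PSpace d n, ψ (symp d n h a) = if a = 0 then (d : ℂ) ^ (2 * n) else 0 := by
  have hsymp (h : PSpace d n) : symp d n h a = h.1 ⬝ᵥ a.2 + h.2 ⬝ᵥ (-a.1) := by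
    rw [symp_eq, dotProduct_neg, sub_eq_add_neg, dotProduct_comm a.1]
  simp only [hsymp, AddChar.map_add_eq_mul, Fintype.sum_prod_type, ← Finset.mul_sum,
    ← Finset.sum_mul, sum_stdAddChar_dotProduct, neg_eq_zero]
  obtain ⟨a₁, a₂⟩ := a
  by_cases h₁ : a₁ = 0 <;> by_cases h₂ : a₂ = 0 <;> simp [h₁, h₂, two_mul, pow_add]

noncomputable def symplecticFourier (f : PSpace d n → ℂ) (h : PSpace d n) : ℂ :=
  ∑ a, f a * ψ (symp d n h a)

lemma sum_symplecticFourier (f : PSpace d n → ℂ) :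
    ∑ h, symplecticFourier f h = (d : ℂ) ^ (2 * n) * f 0 := by
  simp only [symplecticFourier]
  rw [Finset.sum_comm]
  simp only [← Finset.mul_sum, sum_stdAddChar_symp, mul_ite, mul_zero, Finset.sum_ite_eq',
    Finset.mem_univ, if_true, mul_comm]

lemma sum_norm_sq_symplecticFourier (f : PSpace d n → ℂ) :
    ∑ h, (‖symplecticFourier f h‖ : ℂ) ^ 2
      = (d : ℂ) ^ (2 * n) * ∑ a, (‖f a‖ : ℂ) ^ 2 := by
  have hexpand (h : PSpace d n) : (‖symplecticFourier f h‖ : ℂ) ^ 2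
      = ∑ a, ∑ b, f a * star (f b) * ψ (symp d n h (a - b)) := by
    rw [← Complex.mul_conj', symplecticFourier, map_sum, Finset.sum_mul_sum]
    refine Finset.sum_congr rfl fun a _ => Finset.sum_congr rfl fun b _ => ?_
    rw [map_mul, ← AddChar.map_neg_eq_conj, symp_sub_right, sub_eq_add_neg,
      AddChar.map_add_eq_mul, Complex.star_def]
    ring
  simp only [hexpand]
  rw [Finset.sum_comm, Finset.mul_sum]
  refine Finset.sum_congr rfl fun a _ => ?_
  rw [Finset.sum_comm]
  simp only [← Finset.mul_sum, sum_stdAddChar_symp, sub_eq_zero, mul_ite, mul_zero,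
    Finset.sum_ite_eq, Finset.mem_univ, if_true]
  rw [Complex.star_def, Complex.mul_conj']
  ring

/-- `Z^u X^v`, the Weyl operator `W_{(u,v)}` without its phase. -/
noncomputable def zxOp (a : PSpace d n) : Mat d n := Zop d n a.1 * Xop d n a.2

lemma weyl_eq_smul_zxOp (a : PSpace d n) : ∃ c : ℂ, ‖c‖ = 1 ∧ Weyl d n a = c • zxOp a :=
  ⟨_, by rw [norm_zpow, norm_tau, _root_.one_zpow], rfl⟩

lemma zxOp_apply (a : PSpace d n) (r c : Fin n → ZMod d) :
    zxOp a r c = if r = c + a.2 then ψ (r ⬝ᵥ a.1) else 0 := by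
  simp [zxOp, Zop, Xop, diagonal_mul, omg_pow_val, dotProduct]

lemma zxOp_mul_apply (a : PSpace d n) (M : Mat d n) (r c : Fin n → ZMod d) :
    (zxOp a * M) r c = ψ (r ⬝ᵥ a.1) * M (r - a.2) c := by
  rw [mul_apply, Finset.sum_eq_single (r - a.2)]
  · simp [zxOp_apply]
  · intro b _ hb
    rw [zxOp_apply, if_neg (by rintro rfl; simp at hb), zero_mul]
  · simp

lemma mul_conjTranspose_zxOp_apply (a : PSpace d n) (M : Mat d n) (r c : Fin n → ZMod d) :
    (M * (zxOp a)ᴴ) r c = M r (c - a.2) * ψ (-(c ⬝ᵥ a.1)) := by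
  rw [mul_apply, Finset.sum_eq_single (c - a.2)]
  · simp [zxOp_apply, AddChar.map_neg_eq_conj]
  · intro b _ hb
    rw [conjTranspose_apply, zxOp_apply, if_neg (by rintro rfl; simp at hb), star_zero, mul_zero]
  · simp

lemma zxOp_mul_mul_conjTranspose (h a : PSpace d n) :
    zxOp h * zxOp a * (zxOp h)ᴴ = ψ (symp d n h a) • zxOp a := by
  ext r c
  rw [mul_conjTranspose_zxOp_apply, zxOp_mul_apply, Matrix.smul_apply, smul_eq_mul, zxOp_apply,
    zxOp_apply]
  have hiff : r - h.2 = c - h.2 + a.2 ↔ r = c + a.2 := by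
    rw [sub_add_eq_add_sub, sub_left_inj]
  simp only [hiff, mul_ite, ite_mul, mul_zero, zero_mul]
  split_ifs with hr
  · subst hr
    rw [← AddChar.map_add_eq_mul, ← AddChar.map_add_eq_mul, ← AddChar.map_add_eq_mul]
    congr 1
    rw [symp_eq, dotProduct_comm c, dotProduct_comm (c + a.2), dotProduct_comm a.1]
    simp only [add_dotProduct, sub_dotProduct, dotProduct_add]
    ring
  · rfl

lemma trInner_zxOp (a : PSpace d n) (U : Mat d n) :
    trInner d n (zxOp a) U
      = ((d : ℂ) ^ n)⁻¹ * ∑ r, U r (r - a.2) * ψ (-(r ⬝ᵥ a.1)) := by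
  rw [trInner, trace_mul_comm]
  simp only [trace, diag, mul_conjTranspose_zxOp_apply]

lemma sum_trInner_zxOp_smul (U : Mat d n) : ∑ a, trInner d n (zxOp a) U • zxOp a = U := by
  ext r c
  have hd : (d : ℂ) ^ n ≠ 0 := pow_ne_zero _ (NeZero.ne _)
  calc (∑ a, trInner d n (zxOp a) U • zxOp a) r c
      = ∑ p, trInner d n (zxOp (p, r - c)) U * ψ (r ⬝ᵥ p) := by
        simp only [Matrix.sum_apply, Matrix.smul_apply, smul_eq_mul, Fintype.sum_prod_type]
        refine Finset.sum_congr rfl fun p _ => ?_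
        rw [Finset.sum_eq_single (r - c)]
        · rw [zxOp_apply, if_pos (add_sub_cancel c r).symm]
        · intro q _ hq
          rw [zxOp_apply, if_neg (by rintro rfl; simp at hq), mul_zero]
        · simp
    _ = ((d : ℂ) ^ n)⁻¹ * ∑ s, U s (s - (r - c)) * ∑ p, ψ (p ⬝ᵥ (r - s)) := by
        simp only [trInner_zxOp, Finset.mul_sum, Finset.sum_mul]
        rw [Finset.sum_comm]
        refine Finset.sum_congr rfl fun s _ => Finset.sum_congr rfl fun p _ => ?_
        have : p ⬝ᵥ (r - s) = r ⬝ᵥ p + -(s ⬝ᵥ p) := by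
          rw [dotProduct_sub, dotProduct_comm p r, dotProduct_comm p s, sub_eq_add_neg]
        rw [this, AddChar.map_add_eq_mul]
        ring
    _ = U r c := by
        simp only [sum_stdAddChar_dotProduct, sub_eq_zero, mul_ite, mul_zero, Finset.sum_ite_eq,
          Finset.mem_univ, if_true, sub_sub_cancel]
        field_simp

lemma weyl_mul_mul_conjTranspose (h a : PSpace d n) :
    Weyl d n h * Weyl d n a * (Weyl d n h)ᴴ = ψ (symp d n h a) • Weyl d n a := by
  obtain ⟨c, hc, hWh⟩ := weyl_eq_smul_zxOp h
  obtain ⟨c', -, hWa⟩ := weyl_eq_smul_zxOp a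
  rw [hWh, smul_mul_mul_conjTranspose_smul hc, hWa, Matrix.mul_smul, Matrix.smul_mul,
    zxOp_mul_mul_conjTranspose, smul_comm]

lemma sum_trInner_weyl_smul (U : Mat d n) :
    ∑ a, trInner d n (Weyl d n a) U • Weyl d n a = U := by
  conv_rhs => rw [← sum_trInner_zxOp_smul U]
  refine Finset.sum_congr rfl fun a _ => ?_
  obtain ⟨c, hc, hW⟩ := weyl_eq_smul_zxOp a
  rw [hW, trInner_smul_left, smul_smul, mul_right_comm, Complex.star_def,
    Complex.conj_mul_self_of_norm_eq_one hc, one_mul]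

lemma trInner_weyl_zero (V : Mat d n) : trInner d n (Weyl d n 0) V = pq d n 0 V := by
  have hW : Weyl d n 0 = 1 := by
    ext r c
    simp [Weyl, Zop, Xop, one_apply]
  rw [hW, trInner, conjTranspose_one, one_mul, pq_zero]

lemma weyl_mul_mul_conjTranspose_eq_sum (h : PSpace d n) (U : Mat d n) :
    Weyl d n h * U * (Weyl d n h)ᴴ
      = ∑ a, (ψ (symp d n h a) * trInner d n (Weyl d n a) U) • Weyl d n a := by
  conv_lhs => rw [← sum_trInner_weyl_smul U]
  simp only [Matrix.mul_sum, Matrix.sum_mul, Matrix.mul_smul, Matrix.smul_mul,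
    weyl_mul_mul_conjTranspose, smul_smul, mul_comm]

lemma pq_zero_pderiv (h : PSpace d n) (U : Mat d n) :
    pq d n 0 (pderiv d n h U)
      = symplecticFourier (fun a => (‖trInner d n (Weyl d n a) U‖ : ℂ) ^ 2) h := by
  rw [pq_zero, pderiv, trace_mul_comm, ← trInner, weyl_mul_mul_conjTranspose_eq_sum,
    trInner_sum_smul, symplecticFourier]
  refine Finset.sum_congr rfl fun a _ => ?_
  rw [← star_trInner (Weyl d n a) U, Complex.star_def, mul_assoc, Complex.mul_conj', mul_comm]

lemma pq_one (V : Mat d n) : pq d n 1 V = (‖pq d n 0 V‖ : ℂ) ^ 2 := by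
  have hd : (d : ℂ) ^ (2 * n) ≠ 0 := pow_ne_zero _ (NeZero.ne _)
  rw [pq_succ, Finset.sum_congr rfl fun h _ => pq_zero_pderiv h V, sum_symplecticFourier,
    inv_mul_cancel_left₀ hd, trInner_weyl_zero]

end

theorem stmt12_general (d n : ℕ) [NeZero d] (U : Mat d n) :
    pq d n 2 U
      = ∑ a : PSpace d n, ((‖trInner d n (Weyl d n a) U‖ ^ 4 : ℝ) : ℂ) := by
  have hd : (d : ℂ) ^ (2 * n) ≠ 0 := pow_ne_zero _ (NeZero.ne _)
  rw [pq_succ 1]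
  simp only [pq_one, pq_zero_pderiv]
  rw [sum_norm_sq_symplecticFourier, inv_mul_cancel_left₀ hd]
  refine Finset.sum_congr rfl fun a _ => ?_
  rw [norm_pow, Complex.norm_real, norm_norm]
  push_cast
  ring

theorem stmt12 (d n : ℕ) [NeZero d] (hd : d.Prime) (hn : 1 ≤ n) (U : Mat d n) :
    pq d n 2 U
      = ∑ a : PSpace d n, ((‖trInner d n (Weyl d n a) U‖ ^ 4 : ℝ) : ℂ) :=
  stmt12_general d n U

end CH
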